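/- arXiv:2107.10553 — 2 statements merged into one kernel-verified Lean document; each statement's English description precedes it below -/
import Mathlib

section
/- Let Φ be a Young function, φ ∈ G^dec, and f ∈ L^{(Φ,φ)}(ℝⁿ). For a ball B = B(a,r), if the support of f is disjoint from 2B = B(a,2r), then Mf(x) ≤ C Φ⁻¹(φ(r)) ‖f‖_{L^{(Φ,φ)}} for all x ∈ B, where C depends only on Φ and φ. -/
open MeasureTheory ENNReal NNReal Metric Set Filter Topology

noncomputable def geninv (Φ : ℝ≥0∞ → ℝ≥0∞) (u : ℝ≥0∞) : ℝ≥0∞ :=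
  sInf {t : ℝ≥0∞ | u < Φ t}

/-- Generalized Young function (class Φ_Y of the paper): increasing, vanishing at 0,
infinite at ∞, convex, left continuous, nondegenerate. -/
def IsYoung (Φ : ℝ≥0∞ → ℝ≥0∞) : Prop :=
  Monotone Φ ∧ Φ 0 = 0 ∧ Φ ⊤ = ⊤ ∧
    (∀ x y a b : ℝ≥0∞, a + b = 1 → Φ (a * x + b * y) ≤ a * Φ x + b * Φ y) ∧
    (∀ t : ℝ≥0∞, 0 < t → ContinuousWithinAt Φ (Set.Iio t) t) ∧
    (∃ t : ℝ≥0∞, 0 < t ∧ Φ t < ⊤) ∧ (∃ t : ℝ≥0∞, t ≠ ⊤ ∧ 0 < Φ t)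

/-- The class `G^dec`: positive, almost decreasing, and `r ↦ φ(r) rⁿ` almost increasing. -/
def Gdec (n : ℕ) (φ : ℝ → ℝ≥0∞) : Prop :=
  (∀ r : ℝ, 0 < r → 0 < φ r ∧ φ r < ⊤) ∧
    ∃ C : ℝ≥0∞, 0 < C ∧ C ≠ ⊤ ∧ ∀ r s : ℝ, 0 < r → r < s →
      φ s ≤ C * φ r ∧ φ r * ENNReal.ofReal r ^ n ≤ C * (φ s * ENNReal.ofReal s ^ n)

/-- Orlicz–Morrey functional on a single ball `B(a,r)`. -/
noncomputable def ballNorm (Φ : ℝ≥0∞ → ℝ≥0∞) (φ : ℝ → ℝ≥0∞) {d : ℕ}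
    (a : EuclideanSpace ℝ (Fin d)) (r : ℝ) (f : EuclideanSpace ℝ (Fin d) → ℝ≥0∞) : ℝ≥0∞ :=
  sInf {l : ℝ≥0∞ | 0 < l ∧
    (∫⁻ x in ball a r, Φ (f x / l)) ≤ φ r * volume (ball a r)}

/-- Weak Orlicz–Morrey functional on a single ball `B(a,r)`. -/
noncomputable def wBallNorm (Φ : ℝ≥0∞ → ℝ≥0∞) (φ : ℝ → ℝ≥0∞) {d : ℕ}
    (a : EuclideanSpace ℝ (Fin d)) (r : ℝ) (f : EuclideanSpace ℝ (Fin d) → ℝ≥0∞) : ℝ≥0∞ :=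
  sInf {l : ℝ≥0∞ | 0 < l ∧ ∀ t : ℝ≥0∞, 0 < t → t ≠ ⊤ →
    Φ t * volume {x ∈ ball a r | t < f x / l} ≤ φ r * volume (ball a r)}

/-- Orlicz–Morrey norm. -/
noncomputable def omNorm (Φ : ℝ≥0∞ → ℝ≥0∞) (φ : ℝ → ℝ≥0∞) {d : ℕ}
    (f : EuclideanSpace ℝ (Fin d) → ℝ≥0∞) : ℝ≥0∞ :=
  ⨆ (a : EuclideanSpace ℝ (Fin d)) (r : ℝ) (_ : 0 < r), ballNorm Φ φ a r f

/-- Weak Orlicz–Morrey norm. -/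
noncomputable def womNorm (Φ : ℝ≥0∞ → ℝ≥0∞) (φ : ℝ → ℝ≥0∞) {d : ℕ}
    (f : EuclideanSpace ℝ (Fin d) → ℝ≥0∞) : ℝ≥0∞ :=
  ⨆ (a : EuclideanSpace ℝ (Fin d)) (r : ℝ) (_ : 0 < r), wBallNorm Φ φ a r f

/-- Hardy–Littlewood maximal operator (for `ℝ≥0∞`-valued functions). -/
noncomputable def maxOp {d : ℕ} (f : EuclideanSpace ℝ (Fin d) → ℝ≥0∞)
    (x : EuclideanSpace ℝ (Fin d)) : ℝ≥0∞ :=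
  ⨆ (a : EuclideanSpace ℝ (Fin d)) (r : ℝ) (_ : 0 < r) (_ : x ∈ ball a r),
    (volume (ball a r))⁻¹ * ∫⁻ y in ball a r, f y

/-! If `f` vanishes on `2B` and `x ∈ B = B(a, r)`, only balls `B(b, s) ∋ x` with `s > r / 2`
contribute to `Mf(x)`, and for those `φ(s) ≲ φ(r)` by the two monotonicity conditions of
`G^dec`. On each such ball the Luxemburg condition `⨍ Φ(f / λ) ≤ φ(s)` gives
`⨍ f ≤ 2 λ Φ⁻¹(φ(s))`: for any level `t` with `Φ(t) > φ(s)` one has pointwise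
`u ≤ t + t Φ(u) / Φ(t)`, because `Φ(t) u ≤ t Φ(u)` for `u ≥ t` by convexity and `Φ(0) = 0`.
The same convexity gives `Φ⁻¹(K v) ≤ K Φ⁻¹(v)` for `K ≥ 1`, which turns `φ(s) ≤ K φ(r)` into the
claimed bound. -/

namespace IsYoung

variable {Φ : ℝ≥0∞ → ℝ≥0∞}

theorem monotone (hΦ : IsYoung Φ) : Monotone Φ := hΦ.1

theorem map_zero (hΦ : IsYoung Φ) : Φ 0 = 0 := hΦ.2.1

theorem map_top (hΦ : IsYoung Φ) : Φ ⊤ = ⊤ := hΦ.2.2.1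

theorem mul_apply_le_apply_mul (hΦ : IsYoung Φ) {K : ℝ≥0∞} (hK : 1 ≤ K) (hK' : K ≠ ⊤)
    (t : ℝ≥0∞) : K * Φ t ≤ Φ (K * t) := by
  obtain ⟨-, h0, -, hconv, -⟩ := hΦ
  have hK0 : K ≠ 0 := (zero_lt_one.trans_le hK).ne'
  -- convexity between `0` and `K * t` with weight `K⁻¹`
  have h := hconv (K * t) 0 K⁻¹ (1 - K⁻¹) (add_tsub_cancel_of_le (ENNReal.inv_le_one.mpr hK))
  rw [mul_zero, add_zero, h0, mul_zero, add_zero, ← mul_assoc, ENNReal.inv_mul_cancel hK0 hK',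
    one_mul] at h
  calc K * Φ t ≤ K * (K⁻¹ * Φ (K * t)) := by gcongr
    _ = Φ (K * t) := by rw [← mul_assoc, ENNReal.mul_inv_cancel hK0 hK', one_mul]

theorem le_add_div_mul (hΦ : IsYoung Φ) {t u : ℝ≥0∞} (ht : 0 < Φ t) (hu : Φ u ≠ ⊤) :
    u ≤ t + t / Φ t * Φ u := by
  rcases le_or_gt u t with hut | htu
  · exact le_add_right hut
  have ht0 : t ≠ 0 := by rintro rfl; simp [hΦ.map_zero] at ht
  have hu' : u ≠ ⊤ := by rintro rfl; exact hu hΦ.map_top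
  have ht' : Φ t ≠ ⊤ := ne_top_of_le_ne_top hu (hΦ.monotone htu.le)
  have htt : t ≠ ⊤ := ne_top_of_lt htu
  have hK : 1 ≤ u / t := by
    rw [ENNReal.le_div_iff_mul_le (.inl ht0) (.inl htt), one_mul]; exact htu.le
  have h := hΦ.mul_apply_le_apply_mul hK (ENNReal.div_ne_top hu' ht0) t
  rw [ENNReal.div_mul_cancel ht0 htt] at h
  refine le_add_left ?_
  calc u = t / Φ t * (u / t * Φ t) := by
        rw [mul_comm (u / t), ← mul_assoc, ENNReal.div_mul_cancel ht.ne' ht',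
          ENNReal.mul_div_cancel ht0 htt]
    _ ≤ t / Φ t * Φ u := by gcongr

theorem geninv_le_mul (hΦ : IsYoung Φ) {u v K : ℝ≥0∞} (hvu : v ≤ K * u) (hK : 1 ≤ K)
    (hK' : K ≠ ⊤) : geninv Φ v ≤ K * geninv Φ u := by
  have hK0 : K ≠ 0 := (zero_lt_one.trans_le hK).ne'
  rw [← ENNReal.div_le_iff' hK0 hK']
  refine le_sInf fun t (ht : u < Φ t) => ?_
  rw [ENNReal.div_le_iff' hK0 hK']
  refine sInf_le (show v < Φ (K * t) from ?_)
  calc v ≤ K * u := hvu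
    _ < K * Φ t := ENNReal.mul_lt_mul_right hK0 hK' ht
    _ ≤ Φ (K * t) := hΦ.mul_apply_le_apply_mul hK hK' t

theorem geninv_lt_top (hΦ : IsYoung Φ) {u : ℝ≥0∞} (hu : u ≠ ⊤) : geninv Φ u < ⊤ := by
  obtain ⟨-, -, -, -, -, -, t, ht, hΦt⟩ := id hΦ
  obtain ⟨n, hn⟩ := ENNReal.exists_nat_mul_gt hΦt.ne' hu
  have hn1 : (1 : ℝ≥0∞) ≤ n := by
    rcases n with _ | n
    · simp at hn
    · exact_mod_cast n.succ_pos
  have hmem : u < Φ (n * t) :=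
    hn.trans_le (hΦ.mul_apply_le_apply_mul hn1 (ENNReal.natCast_ne_top n) t)
  exact (sInf_le (s := {t | u < Φ t}) hmem).trans_lt
    (ENNReal.mul_lt_top (ENNReal.natCast_ne_top n).lt_top ht.lt_top)

theorem lintegral_le_two_mul_geninv (hΦ : IsYoung Φ) {α : Type*} [MeasurableSpace α]
    {μ : Measure α} (hμ : μ univ ≠ ⊤) {g : α → ℝ≥0∞} {w : ℝ≥0∞} (hw : w ≠ ⊤)
    (hg : ∫⁻ x, Φ (g x) ∂μ ≤ w * μ univ) :
    ∫⁻ x, g x ∂μ ≤ 2 * geninv Φ w * μ univ := by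
  rcases eq_or_ne (μ univ) 0 with hμ0 | hμ0
  · simp [Measure.measure_univ_eq_zero.mp hμ0]
  obtain ⟨g', hg'm, hg'g, hg'eq⟩ := exists_measurable_le_lintegral_eq μ g
  have hΦg' : ∫⁻ x, Φ (g' x) ∂μ ≤ w * μ univ :=
    (lintegral_mono fun x => hΦ.monotone (hg'g x)).trans hg
  have hΦg'm : Measurable fun x => Φ (g' x) := hΦ.monotone.measurable.comp hg'm
  have hfin : ∀ᵐ x ∂μ, Φ (g' x) ≠ ⊤ :=
    (ae_lt_top hΦg'm (ne_top_of_le_ne_top (ENNReal.mul_ne_top hw hμ) hΦg')).mono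
      fun _ => LT.lt.ne
  have key : ∀ t, w < Φ t → ∫⁻ x, g' x ∂μ ≤ t * (2 * μ univ) := by
    intro t ht
    have hdiv : t / Φ t * (w * μ univ) ≤ t * μ univ :=
      calc t / Φ t * (w * μ univ) = t * (w / Φ t) * μ univ := by
            simp only [div_eq_mul_inv]; ring
        _ ≤ t * 1 * μ univ := by
            gcongr; exact ENNReal.div_le_of_le_mul (by rw [one_mul]; exact ht.le)
        _ = t * μ univ := by rw [mul_one]
    calc ∫⁻ x, g' x ∂μ ≤ ∫⁻ x, t + t / Φ t * Φ (g' x) ∂μ :=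
          lintegral_mono_ae (hfin.mono fun x hx => hΦ.le_add_div_mul (zero_le.trans_lt ht) hx)
      _ = t * μ univ + t / Φ t * ∫⁻ x, Φ (g' x) ∂μ := by
          rw [lintegral_add_left measurable_const, lintegral_const, lintegral_const_mul _ hΦg'm]
      _ ≤ t * μ univ + t * μ univ :=
          add_le_add le_rfl ((mul_le_mul' le_rfl hΦg').trans hdiv)
      _ = t * (2 * μ univ) := by ring
  have h2μ0 : 2 * μ univ ≠ 0 := mul_ne_zero two_ne_zero hμ0
  have h2μ : 2 * μ univ ≠ ⊤ := ENNReal.mul_ne_top ENNReal.ofNat_ne_top hμ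
  rw [hg'eq, mul_right_comm, mul_comm, ← ENNReal.div_le_iff h2μ0 h2μ]
  exact le_sInf fun t ht => (ENNReal.div_le_iff h2μ0 h2μ).mpr (key t ht)

end IsYoung

theorem Gdec.exists_le_mul_of_lt_two_mul {n : ℕ} {φ : ℝ → ℝ≥0∞} (hφ : Gdec n φ) :
    ∃ K : ℝ≥0∞, 1 ≤ K ∧ K ≠ ⊤ ∧ ∀ r s : ℝ, 0 < r → r < 2 * s → φ s ≤ K * φ r := by
  obtain ⟨-, C, -, hC, hCφ⟩ := hφ
  refine ⟨max (C * (C * 2 ^ n)) 1, le_max_right _ _, by finiteness, fun r s hr hrs => ?_⟩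
  have hr2 : 0 < r / 2 := half_pos hr
  have hρ0 : ENNReal.ofReal (r / 2) ^ n ≠ 0 := pow_ne_zero n (ENNReal.ofReal_pos.mpr hr2).ne'
  have hρ : ENNReal.ofReal (r / 2) ^ n ≠ ⊤ := by finiteness
  have hpow : ENNReal.ofReal r ^ n = 2 ^ n * ENNReal.ofReal (r / 2) ^ n := by
    rw [← mul_pow, ← ENNReal.ofReal_ofNat 2, ← ENNReal.ofReal_mul zero_le_two,
      mul_div_cancel₀ r two_ne_zero]
  have hdoubling : φ (r / 2) ≤ C * 2 ^ n * φ r := by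
    refine (ENNReal.mul_le_mul_iff_left hρ0 hρ).mp ?_
    calc φ (r / 2) * ENNReal.ofReal (r / 2) ^ n ≤ C * (φ r * ENNReal.ofReal r ^ n) :=
          (hCφ (r / 2) r hr2 (half_lt_self hr)).2
      _ = C * 2 ^ n * φ r * ENNReal.ofReal (r / 2) ^ n := by rw [hpow]; ring
  calc φ s ≤ C * φ (r / 2) := (hCφ (r / 2) s hr2 (by linarith)).1
    _ ≤ C * (C * 2 ^ n * φ r) := by gcongr
    _ ≤ max (C * (C * 2 ^ n)) 1 * φ r := by
        rw [← mul_assoc, ← mul_assoc]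
        exact mul_le_mul_left (le_max_left _ _) _

section OrliczMorrey

variable {d : ℕ} {Φ : ℝ≥0∞ → ℝ≥0∞} {φ : ℝ → ℝ≥0∞} {f : EuclideanSpace ℝ (Fin d) → ℝ≥0∞}

theorem setLIntegral_comp_div_le_of_ballNorm_lt (hΦ : Monotone Φ)
    {b : EuclideanSpace ℝ (Fin d)} {s : ℝ} {l : ℝ≥0∞} (hl : ballNorm Φ φ b s f < l) :
    ∫⁻ x in ball b s, Φ (f x / l) ≤ φ s * volume (ball b s) := by
  obtain ⟨l', ⟨-, hl'⟩, hl'l⟩ := sInf_lt_iff.mp hl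
  exact (lintegral_mono fun x => hΦ (ENNReal.div_le_div_left hl'l.le _)).trans hl'

theorem ballNorm_le_omNorm (b : EuclideanSpace ℝ (Fin d)) {s : ℝ} (hs : 0 < s) :
    ballNorm Φ φ b s f ≤ omNorm Φ φ f :=
  le_iSup_of_le b (le_iSup_of_le s (le_iSup_of_le hs le_rfl))

theorem IsYoung.inv_volume_mul_setLIntegral_le (hΦ : IsYoung Φ)
    {b : EuclideanSpace ℝ (Fin d)} {s : ℝ} (hs : 0 < s) (hφs : φ s ≠ ⊤) {l : ℝ≥0∞}
    (hl : ballNorm Φ φ b s f < l) (hl' : l ≠ ⊤) :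
    (volume (ball b s))⁻¹ * ∫⁻ y in ball b s, f y ≤ 2 * geninv Φ (φ s) * l := by
  have hl0 : l ≠ 0 := (zero_le.trans_lt hl).ne'
  have hvol0 : volume (ball b s) ≠ 0 := (measure_ball_pos volume b hs).ne'
  have hvol : volume (ball b s) ≠ ⊤ := measure_ball_lt_top.ne
  have hμ : (volume.restrict (ball b s)) univ = volume (ball b s) :=
    Measure.restrict_apply_univ _
  have hint := hΦ.lintegral_le_two_mul_geninv (hμ ▸ hvol) hφs
    (hμ ▸ setLIntegral_comp_div_le_of_ballNorm_lt hΦ.monotone hl)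
  calc (volume (ball b s))⁻¹ * ∫⁻ y in ball b s, f y
      = (volume (ball b s))⁻¹ * (l * ∫⁻ y in ball b s, f y / l) := by
        rw [← lintegral_const_mul' _ _ hl']
        simp only [ENNReal.mul_div_cancel hl0 hl']
    _ ≤ (volume (ball b s))⁻¹ * (l * (2 * geninv Φ (φ s) * volume (ball b s))) := by
        rw [hμ] at hint; gcongr
    _ = 2 * geninv Φ (φ s) * l * ((volume (ball b s))⁻¹ * volume (ball b s)) := by ring
    _ = 2 * geninv Φ (φ s) * l := by rw [ENNReal.inv_mul_cancel hvol0 hvol, mul_one]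

theorem IsYoung.maxOp_le_of_eq_zero_on_ball (hΦ : IsYoung Φ) {a x : EuclideanSpace ℝ (Fin d)}
    {r : ℝ} {K l : ℝ≥0∞} (hK : 1 ≤ K) (hK' : K ≠ ⊤) (hφ : ∀ s, 0 < s → φ s ≠ ⊤)
    (hφK : ∀ s, r < 2 * s → φ s ≤ K * φ r) (hf : ∀ y ∈ ball a (2 * r), f y = 0)
    (hx : x ∈ ball a r) (hl : omNorm Φ φ f < l) (hl' : l ≠ ⊤) :
    maxOp f x ≤ 2 * K * geninv Φ (φ r) * l := by
  refine iSup_le fun b => iSup_le fun s => iSup_le fun hs => iSup_le fun hxb => ?_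
  by_cases hrs : r < 2 * s
  · calc (volume (ball b s))⁻¹ * ∫⁻ y in ball b s, f y ≤ 2 * geninv Φ (φ s) * l :=
          hΦ.inv_volume_mul_setLIntegral_le hs (hφ s hs)
            ((ballNorm_le_omNorm b hs).trans_lt hl) hl'
      _ ≤ 2 * (K * geninv Φ (φ r)) * l := by
          gcongr; exact hΦ.geninv_le_mul (hφK s hrs) hK hK'
      _ = 2 * K * geninv Φ (φ r) * l := by ring
  · have hsub : ball b s ⊆ ball a (2 * r) := ball_subset_ball' <| by
      linarith [mem_ball.mp hx, mem_ball'.mp hxb, dist_triangle b x a]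
    have hzero : ∫⁻ y in ball b s, f y = 0 := by
      rw [setLIntegral_congr_fun measurableSet_ball fun y hy => hf y (hsub hy), lintegral_zero]
    simp [hzero]

end OrliczMorrey

/-- If `supp f ∩ 2B = ∅`, then `Mf ≲ Φ⁻¹(φ(r)) ‖f‖_{L^{(Φ,φ)}}` on `B`. -/
theorem stmt13 {d : ℕ} (Φ : ℝ≥0∞ → ℝ≥0∞) (hΦ : IsYoung Φ)
    (φ : ℝ → ℝ≥0∞) (hφ : Gdec d φ) :
    ∃ C : ℝ≥0∞, 0 < C ∧ C ≠ ⊤ ∧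
      ∀ f : EuclideanSpace ℝ (Fin d) → ℝ≥0∞, omNorm Φ φ f < ⊤ →
        ∀ (a : EuclideanSpace ℝ (Fin d)) (r : ℝ), 0 < r →
          (∀ y ∈ ball a (2 * r), f y = 0) →
          ∀ x ∈ ball a r, maxOp f x ≤ C * geninv Φ (φ r) * omNorm Φ φ f := by
  obtain ⟨K, hK, hK', hφK⟩ := hφ.exists_le_mul_of_lt_two_mul
  have hφ_ne_top : ∀ s, 0 < s → φ s ≠ ⊤ := fun s hs => (hφ.1 s hs).2.ne
  refine ⟨2 * K, by positivity, by finiteness, fun f hf a r hr hf0 x hx => ?_⟩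
  have hginv : geninv Φ (φ r) ≠ ⊤ := (hΦ.geninv_lt_top (hφ_ne_top r hr)).ne
  refine ENNReal.le_mul_of_forall_lt (.inr hf.ne) (.inl (by finiteness)) fun c hc l hl => ?_
  rcases eq_or_ne l ⊤ with rfl | hl'
  · simp [(zero_le.trans_lt hc).ne']
  calc maxOp f x ≤ 2 * K * geninv Φ (φ r) * l :=
        hΦ.maxOp_le_of_eq_zero_on_ball hK hK' hφ_ne_top (hφK r · hr) hf0 hx hl hl'
    _ ≤ c * l := by gcongr
end

section
/- Let Φ, Ψ be Young functions, φ : (0,∞) → (0,∞) almost decreasing with φ(r)rⁿ almost increasing, and ρ : (0,∞) → (0,∞). If the generalized fractional maximal operator M_ρ is bounded from the Orlicz–Morrey space L^{(Φ,φ)}(ℝⁿ) to the weak Orlicz–Morrey space wL^{(Ψ,φ)}(ℝⁿ), then there exists A > 0 such that for all r > 0: (sup_{0 < t ≤ r} ρ(t)) · Φ⁻¹(φ(r)) ≤ A · Ψ⁻¹(φ(r)). -/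
open MeasureTheory ENNReal NNReal Metric Set Filter Topology

/-- Generalized fractional maximal operator `M_ρ`. -/
noncomputable def Mrho {d : ℕ} (ρ : ℝ → ℝ≥0∞)
    (f : EuclideanSpace ℝ (Fin d) → ℝ≥0∞) (x : EuclideanSpace ℝ (Fin d)) : ℝ≥0∞ :=
  ⨆ (a : EuclideanSpace ℝ (Fin d)) (s : ℝ) (_ : 0 < s) (_ : x ∈ ball a s),
    ρ s * ((volume (ball a s))⁻¹ * ∫⁻ y in ball a s, f y)

/-! Test the boundedness on `f = t · χ_{B(0,r)}` with `Φ t ≤ φ r`, i.e. any `t` below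
`Φ⁻¹(φ r)`. Convexity of `Φ` together with the two almost-monotonicity conditions on `φ` bound
the Orlicz–Morrey norm of `f` by a constant independent of `r` and `t`. On the other hand every
point of `B(0,r)` lies in a ball of radius `u ≤ r` inside `B(0,r)`, so `M_ρ f ≥ ρ(u) t` on the
whole of `B(0,r)`, and the weak norm on `B(0,r)` of such a function is at least
`ρ(u) t / Ψ⁻¹(φ r)`. Taking suprema over `u ∈ (0,r]` and `t < Φ⁻¹(φ r)` gives the claim. -/

lemma exists_mem_ball_subset_ball {E : Type*} [NormedAddCommGroup E] [NormedSpace ℝ E]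
    {c x : E} {r u : ℝ} (hx : x ∈ ball c r) (hu : 0 < u) (hur : u ≤ r) :
    ∃ a, x ∈ ball a u ∧ ball a u ⊆ ball c r := by
  have hr : 0 < r := hu.trans_le hur
  have hxc : dist c x < r := by rwa [dist_comm, ← mem_ball]
  have hθ : 0 ≤ 1 - u / r := sub_nonneg.2 ((div_le_one hr).2 hur)
  refine ⟨AffineMap.lineMap c x (1 - u / r), ?_, ball_subset_ball' ?_⟩
  · rw [mem_ball, dist_comm, dist_lineMap_right, _root_.sub_sub_cancel,
      Real.norm_of_nonneg (by positivity)]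
    calc u / r * dist c x < u / r * r := by gcongr
      _ = u := div_mul_cancel₀ u hr.ne'
  · rw [dist_lineMap_left, Real.norm_of_nonneg hθ]
    calc u + (1 - u / r) * dist c x ≤ u + (1 - u / r) * r := by gcongr
      _ = r := by field_simp; ring

lemma apply_le_of_lt_geninv {Φ : ℝ≥0∞ → ℝ≥0∞} {u t : ℝ≥0∞} (ht : t < geninv Φ u) :
    Φ t ≤ u := by
  by_contra! h
  exact (sInf_le (show t ∈ {s | u < Φ s} from h)).not_gt ht

lemma lt_apply_of_geninv_lt {Φ : ℝ≥0∞ → ℝ≥0∞} (hΦ : Monotone Φ) {u t : ℝ≥0∞}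
    (ht : geninv Φ u < t) : u < Φ t := by
  obtain ⟨s, hs, hst⟩ := sInf_lt_iff.mp ht
  exact lt_of_lt_of_le hs (hΦ hst.le)

lemma IsYoung.apply_div_le_inv_mul {Φ : ℝ≥0∞ → ℝ≥0∞} (hΦ : IsYoung Φ) {c : ℝ≥0∞}
    (hc : 1 ≤ c) (t : ℝ≥0∞) : Φ (t / c) ≤ c⁻¹ * Φ t := by
  obtain ⟨-, hΦ0, -, hconv, -⟩ := hΦ
  have h := hconv t 0 c⁻¹ (1 - c⁻¹) (add_tsub_cancel_of_le (ENNReal.inv_le_one.2 hc))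
  simpa [hΦ0, ENNReal.div_eq_inv_mul] using h

section Euclidean

variable {d : ℕ}

lemma Gdec.exists_mul_volume_inter_ball_le {φ : ℝ → ℝ≥0∞} (hφ : Gdec d φ) :
    ∃ K : ℝ≥0∞, 1 ≤ K ∧ K ≠ ⊤ ∧ ∀ (b a : EuclideanSpace ℝ (Fin d)) (r s : ℝ), 0 < r → 0 < s →
      φ r * volume (ball b r ∩ ball a s) ≤ K * (φ s * volume (ball a s)) := by
  obtain ⟨-, C₀, -, hC₀top, hC₀⟩ := hφ
  have hC₀K : C₀ ≤ max C₀ 1 := le_max_left _ _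
  refine ⟨max C₀ 1, le_max_right _ _, max_ne_top hC₀top one_ne_top, fun b a r s hr hs => ?_⟩
  -- Small balls `s ≤ r` use that `φ` is almost decreasing, large ones that `φ(r) rᵈ` is
  -- almost increasing.
  rcases le_or_gt s r with hsr | hrs
  · have hφ : φ r ≤ max C₀ 1 * φ s := by
      rcases hsr.eq_or_lt with rfl | hlt
      · exact le_mul_of_one_le_left' (le_max_right _ _)
      · exact (hC₀ s r hs hlt).1.trans (by gcongr)
    calc φ r * volume (ball b r ∩ ball a s) ≤ max C₀ 1 * φ s * volume (ball a s) := by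
          gcongr; exact inter_subset_right
      _ = max C₀ 1 * (φ s * volume (ball a s)) := mul_assoc _ _ _
  · have hvol : ∀ (x : EuclideanSpace ℝ (Fin d)) {t : ℝ}, 0 < t → volume (ball x t) =
        ENNReal.ofReal t ^ d * volume (ball (0 : EuclideanSpace ℝ (Fin d)) 1) := by
      intro x t ht
      rw [Measure.addHaar_ball_of_pos _ x ht, finrank_euclideanSpace_fin, ENNReal.ofReal_pow ht.le]
    calc φ r * volume (ball b r ∩ ball a s) ≤ φ r * volume (ball b r) := by
          gcongr; exact inter_subset_left
      _ = φ r * ENNReal.ofReal r ^ d * volume (ball (0 : EuclideanSpace ℝ (Fin d)) 1) := by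
          rw [hvol b hr, mul_assoc]
      _ ≤ max C₀ 1 * (φ s * ENNReal.ofReal s ^ d) *
            volume (ball (0 : EuclideanSpace ℝ (Fin d)) 1) := by
          gcongr ?_ * _
          exact (hC₀ r s hr hrs).2.trans (by gcongr)
      _ = max C₀ 1 * (φ s * volume (ball a s)) := by rw [hvol a hs]; ring

lemma omNorm_indicator_ball_le {Φ : ℝ≥0∞ → ℝ≥0∞} (hΦ : IsYoung Φ) {φ : ℝ → ℝ≥0∞}
    {c : EuclideanSpace ℝ (Fin d)} {r : ℝ} {t K : ℝ≥0∞} (hK : 1 ≤ K) (hKtop : K ≠ ⊤)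
    (hφK : ∀ (a : EuclideanSpace ℝ (Fin d)) (s : ℝ), 0 < s →
      φ r * volume (ball c r ∩ ball a s) ≤ K * (φ s * volume (ball a s)))
    (ht : Φ t ≤ φ r) :
    omNorm Φ φ ((ball c r).indicator fun _ => t) ≤ K := by
  refine iSup₂_le fun a s => iSup_le fun hs => sInf_le ⟨zero_lt_one.trans_le hK, ?_⟩
  have hind : (fun x => Φ ((ball c r).indicator (fun _ => t) x / K)) =
      (ball c r).indicator fun _ => Φ (t / K) := by
    ext x
    by_cases hx : x ∈ ball c r <;> simp [hx, hΦ.2.1]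
  calc ∫⁻ x in ball a s, Φ ((ball c r).indicator (fun _ => t) x / K)
      = Φ (t / K) * volume (ball c r ∩ ball a s) := by
        rw [hind, lintegral_indicator_const measurableSet_ball,
          Measure.restrict_apply measurableSet_ball]
    _ ≤ K⁻¹ * (φ r * volume (ball c r ∩ ball a s)) := by
        rw [← mul_assoc]
        gcongr
        exact (hΦ.apply_div_le_inv_mul hK t).trans (by gcongr)
    _ ≤ K⁻¹ * (K * (φ s * volume (ball a s))) := by gcongr K⁻¹ * ?_; exact hφK a s hs
    _ = φ s * volume (ball a s) :=
        ENNReal.inv_mul_cancel_left (zero_lt_one.trans_le hK).ne' hKtop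

lemma mul_le_Mrho_indicator_ball {ρ : ℝ → ℝ≥0∞} {c x : EuclideanSpace ℝ (Fin d)} {r u : ℝ}
    (hu : u ∈ Ioc 0 r) (hx : x ∈ ball c r) (t : ℝ≥0∞) :
    ρ u * t ≤ Mrho ρ ((ball c r).indicator fun _ => t) x := by
  obtain ⟨a, hxa, hsub⟩ := exists_mem_ball_subset_ball hx hu.1 hu.2
  have hint : ∫⁻ y in ball a u, (ball c r).indicator (fun _ => t) y = t * volume (ball a u) := by
    rw [lintegral_indicator_const measurableSet_ball, Measure.restrict_apply measurableSet_ball,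
      inter_eq_self_of_subset_right hsub]
  have havg : (volume (ball a u))⁻¹ * (t * volume (ball a u)) = t := by
    rw [mul_comm t]
    exact ENNReal.inv_mul_cancel_left (measure_ball_pos volume a hu.1).ne'
      measure_ball_lt_top.ne
  calc ρ u * t
      = ρ u * ((volume (ball a u))⁻¹ *
          ∫⁻ y in ball a u, (ball c r).indicator (fun _ => t) y) := by rw [hint, havg]
    _ ≤ Mrho ρ ((ball c r).indicator fun _ => t) x :=
        le_iSup_of_le a <| le_iSup_of_le u <| le_iSup_of_le hu.1 <| le_iSup_of_le hxa le_rfl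

lemma le_geninv_mul_of_forall_le {Ψ : ℝ≥0∞ → ℝ≥0∞} (hΨ : Monotone Ψ) {φ : ℝ → ℝ≥0∞}
    {c : EuclideanSpace ℝ (Fin d)} {r : ℝ} (hr : 0 < r) {g : EuclideanSpace ℝ (Fin d) → ℝ≥0∞}
    {m l : ℝ≥0∞} (hl : 0 < l) (hltop : l ≠ ⊤)
    (hw : ∀ t : ℝ≥0∞, 0 < t → t ≠ ⊤ →
      Ψ t * volume {x ∈ ball c r | t < g x / l} ≤ φ r * volume (ball c r))
    (hm : ∀ x ∈ ball c r, m ≤ g x) :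
    m ≤ geninv Ψ (φ r) * l := by
  rw [← ENNReal.div_le_iff_le_mul (Or.inl hl.ne') (Or.inl hltop)]
  by_contra! hlt
  obtain ⟨t, hGt, htm⟩ := exists_between hlt
  have hlevel : {x ∈ ball c r | t < g x / l} = ball c r :=
    sep_eq_self_iff_mem_true.2 fun x hx => htm.trans_le (ENNReal.div_le_div_right (hm x hx) l)
  have hΨt := hw t (pos_of_gt hGt) htm.ne_top
  rw [hlevel, ENNReal.mul_le_mul_iff_left (measure_ball_pos volume c hr).ne'
    measure_ball_lt_top.ne] at hΨt
  exact (lt_apply_of_geninv_lt hΨ hGt).not_ge hΨt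

end Euclidean

theorem stmt19_general {d : ℕ} (Φ Ψ : ℝ≥0∞ → ℝ≥0∞) (hΦ : IsYoung Φ) (hΨ : IsYoung Ψ)
    (φ : ℝ → ℝ≥0∞) (hφ : Gdec d φ)
    (ρ : ℝ → ℝ≥0∞)
    (C : ℝ≥0∞) (hC : C ≠ ⊤)
    (hbdd : ∀ f : EuclideanSpace ℝ (Fin d) → ℝ≥0∞,
      womNorm Ψ φ (Mrho ρ f) ≤ C * omNorm Φ φ f) :
    ∃ A : ℝ≥0∞, 0 < A ∧ A ≠ ⊤ ∧ ∀ r : ℝ, 0 < r →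
      (⨆ t ∈ Set.Ioc (0 : ℝ) r, ρ t) * geninv Φ (φ r) ≤ A * geninv Ψ (φ r) := by
  obtain ⟨K, hK, hKtop, hφK⟩ := hφ.exists_mul_volume_inter_ball_le
  have hA : C * K < C * K + 1 := ENNReal.lt_add_right (ENNReal.mul_ne_top hC hKtop) one_ne_zero
  refine ⟨C * K + 1, pos_of_gt hA, ENNReal.add_ne_top.2 ⟨hA.ne_top, one_ne_top⟩, fun r hr => ?_⟩
  refine ENNReal.mul_le_of_forall_lt fun a ha t ht => ?_
  obtain ⟨u, hu, hau⟩ : ∃ u ∈ Ioc 0 r, a < ρ u := by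
    simpa only [lt_iSup_iff, exists_prop] using ha
  set f := (ball (0 : EuclideanSpace ℝ (Fin d)) r).indicator fun _ => t
  have hf : omNorm Φ φ f ≤ K :=
    omNorm_indicator_ball_le hΦ hK hKtop (hφK 0 · r · hr) (apply_le_of_lt_geninv ht)
  have hMf : wBallNorm Ψ φ 0 r (Mrho ρ f) < C * K + 1 := calc
    wBallNorm Ψ φ 0 r (Mrho ρ f) ≤ womNorm Ψ φ (Mrho ρ f) :=
      le_iSup_of_le 0 <| le_iSup_of_le r <| le_iSup_of_le hr le_rfl
    _ ≤ C * K := (hbdd f).trans (by gcongr)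
    _ < C * K + 1 := hA
  obtain ⟨l, ⟨hl, hlw⟩, hlA⟩ := sInf_lt_iff.mp hMf
  calc a * t ≤ ρ u * t := by gcongr
    _ ≤ geninv Ψ (φ r) * l :=
      le_geninv_mul_of_forall_le hΨ.1 hr hl hlA.ne_top hlw fun x hx =>
        mul_le_Mrho_indicator_ball hu hx t
    _ ≤ (C * K + 1) * geninv Ψ (φ r) := by rw [mul_comm]; gcongr

/-- Necessity: boundedness of `M_ρ` from `L^{(Φ,φ)}` to `wL^{(Ψ,φ)}` implies the
pointwise condition on `ρ, Φ, Ψ, φ`. -/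
theorem stmt19 {d : ℕ} (Φ Ψ : ℝ≥0∞ → ℝ≥0∞) (hΦ : IsYoung Φ) (hΨ : IsYoung Ψ)
    (φ : ℝ → ℝ≥0∞) (hφ : Gdec d φ)
    (ρ : ℝ → ℝ≥0∞) (hρ : ∀ t : ℝ, 0 < t → 0 < ρ t ∧ ρ t < ⊤)
    (C : ℝ≥0∞) (hC : C ≠ ⊤)
    (hbdd : ∀ f : EuclideanSpace ℝ (Fin d) → ℝ≥0∞,
      womNorm Ψ φ (Mrho ρ f) ≤ C * omNorm Φ φ f) :
    ∃ A : ℝ≥0∞, 0 < A ∧ A ≠ ⊤ ∧ ∀ r : ℝ, 0 < r →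
      (⨆ t ∈ Set.Ioc (0 : ℝ) r, ρ t) * geninv Φ (φ r) ≤ A * geninv Ψ (φ r) :=
  stmt19_general Φ Ψ hΦ hΨ φ hφ ρ C hC hbdd
end
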